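/- Let G be a weakly closed finite simple graph. Then every cycle in G of length 5 or more has a chord: for every cycle v_1, v_2, …, v_k, v_1 in G with k ≥ 5, there exist two vertices v_a, v_b of the cycle that are not consecutive on the cycle but satisfy {v_a, v_b} ∈ E(G). -/
import Mathlib


/-- `G` is weakly closed: some labeling of the vertices by `1, …, n` is such that for
every edge `{i, j}` with `i < j` and every `i < k < j`, `{i,k} ∈ E(G)` or `{k,j} ∈ E(G)`. -/
def WeaklyClosed {V : Type*} [Fintype V] (G : SimpleGraph V) : Prop :=
  ∃ σ : V ≃ Fin (Fintype.card V), ∀ i j k : V,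
    G.Adj i j → σ i < σ k → σ k < σ j → G.Adj i k ∨ G.Adj k j

/-- Every cycle of length at least 5 in a weakly closed graph has a chord. -/
theorem cycle_has_chord_of_weaklyClosed {V : Type*} [Fintype V] (G : SimpleGraph V)
    (h : WeaklyClosed G) (m : ℕ) (hm : 5 ≤ m) (v : ZMod m → V)
    (hinj : Function.Injective v) (hcyc : ∀ i : ZMod m, G.Adj (v i) (v (i + 1))) :
    ∃ a b : ZMod m, a ≠ b ∧ b ≠ a + 1 ∧ a ≠ b + 1 ∧ G.Adj (v a) (v b) := by
  by_contra hcon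
  push_neg at hcon
  obtain ⟨σ, hσ⟩ := h
  haveI : NeZero m := ⟨by omega⟩
  set L : ZMod m → Fin (Fintype.card V) := fun i => σ (v i) with hLdef
  have hLinj : Function.Injective L := fun a b hab => hinj (σ.injective hab)
  have hnz : ∀ k : ℕ, 0 < k → k < m → ((k : ZMod m)) ≠ 0 := by
    intro k hk1 hk2 hk
    rw [ZMod.natCast_eq_zero_iff] at hk
    have := Nat.le_of_dvd hk1 hk
    omega
  have h1 : (1 : ZMod m) ≠ 0 := by
    have := hnz 1 (by omega) (by omega); simpa using this
  have h2 : (2 : ZMod m) ≠ 0 := by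
    have := hnz 2 (by omega) (by omega); simpa using this
  have h3 : (3 : ZMod m) ≠ 0 := by
    have := hnz 3 (by omega) (by omega); simpa using this
  have h4 : (4 : ZMod m) ≠ 0 := by
    have := hnz 4 (by omega) (by omega); simpa using this
  -- key lemma: if L k is strictly between the labels of the endpoints of a cycle
  -- edge (i, i+1), then k is cycle-adjacent to one of the endpoints
  have key : ∀ i k : ZMod m, L i < L k → L k < L (i + 1) → k = i - 1 ∨ k = i + 2 := by
    intro i k hik hki
    rcases hσ (v i) (v (i + 1)) (v k) (hcyc i) hik hki with hadj | hadj
    · left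
      by_contra hne
      have hik' : i ≠ k := by rintro rfl; exact lt_irrefl _ hik
      have hki' : k ≠ i + 1 := by rintro rfl; exact lt_irrefl _ hki
      have hik1 : i ≠ k + 1 := fun e => hne (by rw [e]; ring)
      exact hcon i k hik' hki' hik1 hadj
    · right
      by_contra hne
      have hki' : k ≠ i + 1 := by rintro rfl; exact lt_irrefl _ hki
      have he1 : i + 1 ≠ k + 1 := by
        intro e
        have : i = k := by linear_combination e
        rw [this] at hik; exact lt_irrefl _ hik
      have he2 : k ≠ i + 1 + 1 := fun e => hne (by rw [e]; ring)
      exact hcon k (i + 1) hki' he1 he2 hadj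
  have key' : ∀ i k : ZMod m, L (i + 1) < L k → L k < L i → k = i - 1 ∨ k = i + 2 := by
    intro i k hik hki
    rcases hσ (v (i + 1)) (v i) (v k) (hcyc i).symm hik hki with hadj | hadj
    · right
      by_contra hne
      have ha : i + 1 ≠ k := by rintro rfl; exact lt_irrefl _ hik
      have hb : k ≠ i + 1 + 1 := fun e => hne (by rw [e]; ring)
      have hc : i + 1 ≠ k + 1 := by
        intro e
        have : i = k := by linear_combination e
        rw [this] at hki; exact lt_irrefl _ hki
      exact hcon (i + 1) k ha hb hc hadj
    · left
      by_contra hne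
      have ha : k ≠ i := by rintro rfl; exact lt_irrefl _ hki
      have hb : i ≠ k + 1 := fun e => hne (by rw [e]; ring)
      have hc : k ≠ i + 1 := by rintro rfl; exact lt_irrefl _ hik
      exact hcon k i ha hb hc hadj
  obtain ⟨p, -, hp⟩ :=
    Finset.exists_min_image (Finset.univ : Finset (ZMod m)) L ⟨0, Finset.mem_univ 0⟩
  have hpmin : ∀ k : ZMod m, k ≠ p → L p < L k := fun k hk =>
    lt_of_le_of_ne (hp k (Finset.mem_univ k)) fun e => hk (hLinj e).symm
  have hab : L (p - 1) ≠ L (p + 1) := by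
    intro e
    have : p - 1 = p + 1 := hLinj e
    exact h2 (by linear_combination -this)
  rcases lt_or_gt_of_ne hab with hcase | hcase
  · -- L (p-1) < L (p+1)
    have hs : L (p + 1) < L (p - 2) := by
      rcases lt_or_gt_of_ne (a := L (p - 2)) (b := L (p + 1))
        (fun e => h3 (by linear_combination -(hLinj e))) with hlt | hgt
      · rcases key p (p - 2) (hpmin (p - 2) fun e => h2 (by linear_combination -e)) hlt with
          e | e
        · exact absurd e (fun e => h1 (by linear_combination -e))
        · exact absurd e (fun e => h4 (by linear_combination -e))
      · exact hgt
    have hre : p - 2 + 1 = p - 1 := by ring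
    rcases key' (p - 2) (p + 1) (by rw [hre]; exact hcase) hs with e | e
    · exact h4 (by linear_combination e)
    · exact h1 (by linear_combination e)
  · -- L (p+1) < L (p-1)
    have hs : L (p - 1) < L (p + 2) := by
      rcases lt_or_gt_of_ne (a := L (p + 2)) (b := L (p - 1))
        (fun e => h3 (by linear_combination hLinj e)) with hlt | hgt
      · have hre : p - 1 + 1 = p := by ring
        rcases key' (p - 1) (p + 2)
          (by rw [hre]; exact hpmin (p + 2) fun e => h2 (by linear_combination e)) hlt with
          e | e
        · exact absurd e (fun e => h4 (by linear_combination e))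
        · exact absurd e (fun e => h1 (by linear_combination e))
      · exact hgt
    rcases key (p + 1) (p - 1) hcase (by
        have : p + 1 + 1 = p + 2 := by ring
        rw [this]; exact hs) with e | e
    · exact h1 (by linear_combination -e)
    · exact h4 (by linear_combination -e)
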